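/- For every q ∈ 𝔯⁺ with |q| ≥ 0.54, the function f_q is strictly convex on the interval [0, π/2]; indeed its second derivative satisfies f_q''(α) > 0 for all α ∈ [0, π/2]. -/

import Mathlib

open Matrix

noncomputable section

/-- Euclidean norm of a point of `ℝ²`. -/
def nrm (q : ℝ × ℝ) : ℝ := Real.sqrt (q.1 ^ 2 + q.2 ^ 2)

/-- Hill's region `𝔯`. -/
def HillRegion : Set (ℝ × ℝ) :=
  {q | (3:ℝ) ^ ((4:ℝ)/3) / 2 < 1 / nrm q + (3/2) * q.1 ^ 2 ∧
       |q.1| < (3:ℝ) ^ (-(1:ℝ)/3) ∧ |q.2| < 2 * (3:ℝ) ^ (-(4:ℝ)/3)}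

/-- The first quadrant part `𝔯⁺` of Hill's region. -/
def HillRegionPlus : Set (ℝ × ℝ) := {q ∈ HillRegion | 0 ≤ q.1 ∧ 0 ≤ q.2}

/-- The symmetric matrix `𝓗(q)`. -/
def Hmat (q : ℝ × ℝ) : Matrix (Fin 2) (Fin 2) ℝ :=
  (1 / (nrm q) ^ 5) •
    !![-2 * (nrm q) ^ 5 + (nrm q) ^ 2 - 3 * q.1 ^ 2, -3 * q.1 * q.2;
       -3 * q.1 * q.2, (nrm q) ^ 5 + (nrm q) ^ 2 - 3 * q.2 ^ 2]

/-- The vector `w(q) = (q₂/|q|³, 3q₁ - q₁/|q|³)`. -/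
def w (q : ℝ × ℝ) : Fin 2 → ℝ := ![q.2 / (nrm q) ^ 3, 3 * q.1 - q.1 / (nrm q) ^ 3]

/-- The radius `ρ(q) = √(3q₁² + 2/|q| - 3^{4/3})`. -/
def ρ (q : ℝ × ℝ) : ℝ := Real.sqrt (3 * q.1 ^ 2 + 2 / nrm q - (3:ℝ) ^ ((4:ℝ)/3))

/-- The function `f_q(α) = (w(q)+s)ᵀ 𝓗(q) (w(q)+s)` where
`s = ρ(q)·(cos(θ+α), sin(θ+α))` and `θ` is the polar angle of `q`. -/
def fq (q : ℝ × ℝ) (θ : ℝ) (α : ℝ) : ℝ :=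
  (w q + ρ q • ![Real.cos (θ + α), Real.sin (θ + α)]) ⬝ᵥ
    (Hmat q).mulVec (w q + ρ q • ![Real.cos (θ + α), Real.sin (θ + α)])

/-!
Put `r = |q|`, `e(φ) = (cos φ, sin φ)` and `e'(φ) = (-sin φ, cos φ)`. Since `e'' = -e`, the second
derivative of any quadratic form `α ↦ Q(x + ρ e(θ + α))` on `ℝ²` is
`-ρ (⟨e, Mx⟩ + ⟨x, Me⟩) + 2ρ² (⟨e', Me'⟩ - ⟨e, Me⟩)`. For `M = 𝓗(q)`, `x = w(q)` this equals
`2ρ/r⁵` times a quadratic polynomial in `c = cos α`, `s = sin α` (`deriv2Numerator`), because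
`e(θ + α)` has coordinates `c, s` in the orthonormal frame `q/r`, `q^⊥/r`.

With `q₁, q₂ ≥ 0` and `c, s ∈ [0, 1]` that polynomial is positive as soon as `3r²ρ < 1 - 3r³`:
the `cs`-term is absorbed by the `c`-term, and what remains is at least a convex combination
of two positive numbers. The bound `3r²ρ < 1 - 3r³` is where Hill's region enters: with
`κ = 3^{1/3}` it gives `κr < 1` and `ρ² ≤ 3r² + 2/r - 3κ`, and
`(1 - 3r³)² - 9r⁴(3r² + 2/r - 3κ) = (1 - κr)³ (6r³ + 6κ²r² + 3κr + 1)`.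
-/

open Real

theorem HasDerivAt.dotProduct {𝕜 ι : Type*} [NontriviallyNormedField 𝕜] [Fintype ι]
    {u v : 𝕜 → ι → 𝕜} {u' v' : ι → 𝕜} {t : 𝕜}
    (hu : HasDerivAt u u' t) (hv : HasDerivAt v v' t) :
    HasDerivAt (fun t => u t ⬝ᵥ v t) (u' ⬝ᵥ v t + u t ⬝ᵥ v') t := by
  simp only [_root_.dotProduct, ← Finset.sum_add_distrib]
  exact HasDerivAt.fun_sum fun i _ => (hasDerivAt_pi.1 hu i).fun_mul (hasDerivAt_pi.1 hv i)

theorem HasDerivAt.mulVec {𝕜 ι κ : Type*} [NontriviallyNormedField 𝕜] [Fintype κ]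
    (M : Matrix ι κ 𝕜) {v : 𝕜 → κ → 𝕜} {v' : κ → 𝕜} {t : 𝕜} (hv : HasDerivAt v v' t) :
    HasDerivAt (fun t => M *ᵥ v t) (M *ᵥ v') t :=
  hasDerivAt_pi.2 fun i => by
    simp only [Matrix.mulVec, _root_.dotProduct]
    exact HasDerivAt.fun_sum fun j _ => (hasDerivAt_pi.1 hv j).const_mul (M i j)

theorem HasDerivAt.dotProduct_mulVec_self {𝕜 ι : Type*} [NontriviallyNormedField 𝕜] [Fintype ι]
    (M : Matrix ι ι 𝕜) {v : 𝕜 → ι → 𝕜} {v' : ι → 𝕜} {t : 𝕜} (hv : HasDerivAt v v' t) :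
    HasDerivAt (fun t => v t ⬝ᵥ M *ᵥ v t) (v' ⬝ᵥ M *ᵥ v t + v t ⬝ᵥ M *ᵥ v') t :=
  hv.dotProduct (hv.mulVec M)

theorem hasDerivAt_cos_sin (θ α : ℝ) :
    HasDerivAt (fun α => ![cos (θ + α), sin (θ + α)]) ![-sin (θ + α), cos (θ + α)] α := by
  have hφ : HasDerivAt (fun α => θ + α) 1 α := (hasDerivAt_id α).const_add θ
  refine hasDerivAt_pi.2 fun i => ?_
  fin_cases i
  · simpa using hφ.cos
  · simpa using hφ.sin

theorem hasDerivAt_neg_sin_cos (θ α : ℝ) :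
    HasDerivAt (fun α => ![-sin (θ + α), cos (θ + α)]) (-![cos (θ + α), sin (θ + α)]) α := by
  have hφ : HasDerivAt (fun α => θ + α) 1 α := (hasDerivAt_id α).const_add θ
  refine hasDerivAt_pi.2 fun i => ?_
  fin_cases i
  · simpa using hφ.sin.fun_neg
  · simpa using hφ.cos

theorem deriv_deriv_quadForm_circle (M : Matrix (Fin 2) (Fin 2) ℝ) (x : Fin 2 → ℝ) (ρ θ α : ℝ) :
    deriv (deriv fun α => (x + ρ • ![cos (θ + α), sin (θ + α)]) ⬝ᵥ
        M *ᵥ (x + ρ • ![cos (θ + α), sin (θ + α)])) α =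
      -ρ * (![cos (θ + α), sin (θ + α)] ⬝ᵥ M *ᵥ x + x ⬝ᵥ M *ᵥ ![cos (θ + α), sin (θ + α)]) +
        2 * ρ ^ 2 * (![-sin (θ + α), cos (θ + α)] ⬝ᵥ M *ᵥ ![-sin (θ + α), cos (θ + α)] -
          ![cos (θ + α), sin (θ + α)] ⬝ᵥ M *ᵥ ![cos (θ + α), sin (θ + α)]) := by
  have hγ (α : ℝ) : HasDerivAt (fun α => x + ρ • ![cos (θ + α), sin (θ + α)])
      (ρ • ![-sin (θ + α), cos (θ + α)]) α :=
    ((hasDerivAt_cos_sin θ α).fun_const_smul ρ).const_add x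
  have hγ' : HasDerivAt (fun α => ρ • ![-sin (θ + α), cos (θ + α)])
      (ρ • -![cos (θ + α), sin (θ + α)]) α :=
    (hasDerivAt_neg_sin_cos θ α).fun_const_smul ρ
  rw [funext fun α => ((hγ α).dotProduct_mulVec_self M).deriv,
    ((hγ'.dotProduct ((hγ α).mulVec M)).fun_add ((hγ α).dotProduct (hγ'.mulVec M))).deriv]
  simp only [dotProduct_add, add_dotProduct, mulVec_add, mulVec_smul, mulVec_neg, smul_dotProduct,
    dotProduct_smul, neg_dotProduct, dotProduct_neg, smul_eq_mul, smul_neg]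
  ring

theorem nrm_sq (q : ℝ × ℝ) : nrm q ^ 2 = q.1 ^ 2 + q.2 ^ 2 :=
  sq_sqrt (by positivity)

theorem rpow_four_thirds : (3 : ℝ) ^ ((4 : ℝ) / 3) = 3 * (3 : ℝ) ^ ((1 : ℝ) / 3) := by
  rw [show (4 : ℝ) / 3 = 1 + 1 / 3 by norm_num, rpow_add (by norm_num), rpow_one]

theorem rpow_neg_one_third : (3 : ℝ) ^ (-(1 : ℝ) / 3) = ((3 : ℝ) ^ ((1 : ℝ) / 3)) ^ 2 / 3 := by
  rw [show -(1 : ℝ) / 3 = 1 / 3 * 2 - 1 by norm_num, rpow_sub (by norm_num), rpow_one,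
    rpow_mul (by norm_num), rpow_two]

theorem rpow_one_third_pow_three : ((3 : ℝ) ^ ((1 : ℝ) / 3)) ^ 3 = 3 := by
  rw [← rpow_natCast, ← rpow_mul (by norm_num)]
  norm_num

theorem nine_mul_pow_four_mul_lt_sq {κ r : ℝ} (hκ : κ ^ 3 = 3) (hκ0 : 0 < κ) (hr : 0 < r)
    (hκr : κ * r < 1) : 9 * r ^ 4 * (3 * r ^ 2 + 2 / r - 3 * κ) < (1 - 3 * r ^ 3) ^ 2 := by
  have hfactor : (1 - 3 * r ^ 3) ^ 2 - 9 * r ^ 4 * (3 * r ^ 2 + 2 / r - 3 * κ) =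
      (1 - κ * r) ^ 3 * (6 * r ^ 3 + 6 * κ ^ 2 * r ^ 2 + 3 * κ * r + 1) := by
    field_simp
    linear_combination (10 * r ^ 3 - 15 * κ * r ^ 4 + 6 * κ ^ 2 * r ^ 5 + 6 * r ^ 6) * hκ
  have : 0 < (1 - κ * r) ^ 3 * (6 * r ^ 3 + 6 * κ ^ 2 * r ^ 2 + 3 * κ * r + 1) :=
    mul_pos (pow_pos (by linarith) 3) (by positivity)
  linarith

namespace HillRegion

theorem nrm_pos {q : ℝ × ℝ} (hq : q ∈ HillRegion) : 0 < nrm q := by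
  -- with `1 / 0 = 0`, at `q = 0` the first defining inequality reads `3^{4/3} / 2 < 0`
  obtain ⟨hE, -⟩ := hq
  refine (sqrt_nonneg _).lt_of_ne' fun (h : nrm q = 0) => ?_
  have h1 : q.1 ^ 2 = 0 := by nlinarith [h ▸ nrm_sq q, sq_nonneg q.1, sq_nonneg q.2]
  rw [h, h1] at hE
  norm_num at hE
  linarith [rpow_pos_of_pos (by norm_num : (0 : ℝ) < 3) ((4 : ℝ) / 3)]

theorem ρ_sq {q : ℝ × ℝ} (hq : q ∈ HillRegion) :
    ρ q ^ 2 = 3 * q.1 ^ 2 + 2 / nrm q - (3 : ℝ) ^ ((4 : ℝ) / 3) := by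
  obtain ⟨hE, -⟩ := hq
  exact sq_sqrt (by linarith [show 2 / nrm q = 2 * (1 / nrm q) by ring])

theorem ρ_pos {q : ℝ × ℝ} (hq : q ∈ HillRegion) : 0 < ρ q := by
  obtain ⟨hE, -⟩ := hq
  exact sqrt_pos.2 (by linarith [show 2 / nrm q = 2 * (1 / nrm q) by ring])

theorem three_mul_nrm_sq_mul_ρ_lt {q : ℝ × ℝ} (hq : q ∈ HillRegion) :
    3 * nrm q ^ 2 * ρ q < 1 - 3 * nrm q ^ 3 := by
  have hr := nrm_pos hq
  have hρsq := ρ_sq hq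
  set κ : ℝ := (3 : ℝ) ^ ((1 : ℝ) / 3)
  have hκ : κ ^ 3 = 3 := rpow_one_third_pow_three
  have hκ0 : 0 < κ := by positivity
  obtain ⟨hE, hq1, -⟩ := hq
  rw [rpow_four_thirds] at hE hρsq
  rw [rpow_neg_one_third] at hq1
  have hq1sq : 3 * q.1 ^ 2 < κ := by
    have : q.1 ^ 2 < (κ ^ 2 / 3) ^ 2 := by
      simpa only [sq_abs] using pow_lt_pow_left₀ hq1 (abs_nonneg _) two_ne_zero
    nlinarith
  have hκr : κ * nrm q < 1 := by
    have : κ < 1 / nrm q := by linarith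
    rwa [lt_div_iff₀ hr] at this
  have hρle : ρ q ^ 2 ≤ 3 * nrm q ^ 2 + 2 / nrm q - 3 * κ := by nlinarith [nrm_sq q, sq_nonneg q.2]
  have h3r : 3 * nrm q ^ 3 < 1 := by
    simpa only [mul_pow, hκ] using pow_lt_one₀ (by positivity) hκr three_ne_zero
  refine lt_of_pow_lt_pow_left₀ 2 (by linarith) ?_
  calc (3 * nrm q ^ 2 * ρ q) ^ 2 = 9 * nrm q ^ 4 * ρ q ^ 2 := by ring
    _ ≤ 9 * nrm q ^ 4 * (3 * nrm q ^ 2 + 2 / nrm q - 3 * κ) := by gcongr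
    _ < (1 - 3 * nrm q ^ 3) ^ 2 := nine_mul_pow_four_mul_lt_sq hκ hκ0 hr hκr

end HillRegion

def deriv2Numerator (r ρ a b c s : ℝ) : ℝ :=
  3 * a * b * r * (3 - r ^ 3) * c + (1 - 2 * r ^ 3 - 3 * a ^ 2 * r ^ 4) * s +
    3 * ρ * (r ^ 3 * ((a ^ 2 - b ^ 2) * (c ^ 2 - s ^ 2) - 4 * a * b * c * s) + r ^ 2 * (c ^ 2 - s ^ 2))

theorem deriv2Numerator_pos {r ρ a b c s : ℝ} (hr : 0 < r) (hρ : 0 < ρ) (ha : 0 ≤ a) (hb : 0 ≤ b)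
    (hab : a ^ 2 + b ^ 2 = r ^ 2) (hρr : 3 * r ^ 2 * ρ < 1 - 3 * r ^ 3) (hc : 0 ≤ c) (hs : 0 ≤ s)
    (hcs : c ^ 2 + s ^ 2 = 1) : 0 < deriv2Numerator r ρ a b c s := by
  have hs1 : s ≤ 1 := by nlinarith
  have hr3 : 0 < r ^ 3 := by positivity
  have hr3' : r ^ 3 < 1 := by nlinarith [mul_pos (pow_pos hr 2) hρ]
  set A := 3 * ρ * (r ^ 3 * (a ^ 2 - b ^ 2) + r ^ 2) with hA_def
  set B := 1 - 2 * r ^ 3 - 3 * a ^ 2 * r ^ 4 with hB_def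
  have hmixed : 0 ≤ a * b * c * (3 * r * (3 - r ^ 3) - 12 * ρ * r ^ 3 * s) := by
    refine mul_nonneg (by positivity) ?_
    nlinarith [mul_le_mul_of_nonneg_left hs1 (by positivity : 0 ≤ 12 * ρ * r ^ 3)]
  have hA : 0 < A := by
    have : r ^ 2 * (1 - r ^ 3) ≤ r ^ 3 * (a ^ 2 - b ^ 2) + r ^ 2 := by
      nlinarith [mul_nonneg hr3.le (sq_nonneg a)]
    nlinarith [mul_pos (mul_pos hρ (pow_pos hr 2)) (sub_pos.2 hr3')]
  have hAB : A < B := by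
    have : r ^ 3 * (a ^ 2 - b ^ 2) + r ^ 2 ≤ r ^ 2 * (1 + r ^ 3) := by nlinarith
    have ha2 : a ^ 2 * r ^ 4 ≤ r ^ 6 := by nlinarith [pow_pos hr 4]
    nlinarith [mul_le_mul_of_nonneg_left this (by positivity : 0 ≤ 3 * ρ),
      mul_lt_mul_of_pos_right hρr (by positivity : 0 < 1 + r ^ 3)]
  have hconvex : 0 < A * (1 - s) + (B - A) * s := by
    rcases le_or_gt s (1 / 2) with h | h <;> nlinarith
  have hexpand : deriv2Numerator r ρ a b c s =
      a * b * c * (3 * r * (3 - r ^ 3) - 12 * ρ * r ^ 3 * s) +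
        (A * (1 - s) + (B - A) * s) + 2 * A * s * (1 - s) := by
    simp only [deriv2Numerator, hA_def, hB_def]
    linear_combination 3 * ρ * (r ^ 3 * (a ^ 2 - b ^ 2) + r ^ 2) * hcs
  rw [hexpand]
  nlinarith [mul_nonneg (mul_nonneg hA.le hs) (sub_nonneg.2 hs1)]

theorem deriv_deriv_fq {q : ℝ × ℝ} (hr : 0 < nrm q) {θ : ℝ} (hq1 : q.1 = nrm q * cos θ)
    (hq2 : q.2 = nrm q * sin θ) (α : ℝ) :
    deriv (deriv (fq q θ)) α =
      2 * ρ q / nrm q ^ 5 * deriv2Numerator (nrm q) (ρ q) q.1 q.2 (cos α) (sin α) := by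
  have hpyth := nrm_sq q
  have hc : cos θ = q.1 / nrm q := by rw [hq1]; field_simp
  have hs : sin θ = q.2 / nrm q := by rw [hq2]; field_simp
  unfold fq
  rw [deriv_deriv_quadForm_circle]
  simp only [Hmat, w, deriv2Numerator, mulVec, dotProduct, Fin.sum_univ_two, Matrix.smul_apply,
    of_apply, cons_val', cons_val_zero, cons_val_one, cons_val_fin_one, empty_val', smul_eq_mul]
  rw [cos_add, sin_add, hc, hs]
  generalize nrm q = r at *
  generalize ρ q = p
  obtain ⟨a, b⟩ := q
  dsimp only at *
  field_simp
  linear_combination 2 * p * r ^ 2 * (9 * a * b * r * cos α + (1 - 2 * r ^ 3) * sin α +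
    3 * p * (a ^ 2 + b ^ 2 + r ^ 2) * (cos α ^ 2 - sin α ^ 2)) * hpyth.symm

theorem continuous_fq (q : ℝ × ℝ) (θ : ℝ) : Continuous (fq q θ) := by
  unfold fq
  fun_prop

theorem fq_strictly_convex_general (q : ℝ × ℝ) (hq : q ∈ HillRegionPlus) (θ : ℝ)
    (hq1 : q.1 = nrm q * Real.cos θ) (hq2 : q.2 = nrm q * Real.sin θ) :
    StrictConvexOn ℝ (Set.Icc 0 (Real.pi / 2)) (fq q θ) ∧
    ∀ α ∈ Set.Icc (0:ℝ) (Real.pi / 2), 0 < deriv (deriv (fq q θ)) α := by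
  obtain ⟨hH, ha, hb⟩ := hq
  have hr := HillRegion.nrm_pos hH
  have hρ := HillRegion.ρ_pos hH
  have hpos : ∀ α ∈ Set.Icc (0:ℝ) (π / 2), 0 < deriv (deriv (fq q θ)) α := by
    rintro α ⟨hα0, hαπ⟩
    rw [deriv_deriv_fq hr hq1 hq2]
    exact mul_pos (by positivity) (deriv2Numerator_pos hr hρ ha hb (nrm_sq q).symm
      (HillRegion.three_mul_nrm_sq_mul_ρ_lt hH) (cos_nonneg_of_mem_Icc ⟨by linarith, hαπ⟩)
      (sin_nonneg_of_nonneg_of_le_pi hα0 (by linarith)) (cos_sq_add_sin_sq α))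
  exact ⟨strictConvexOn_of_deriv2_pos' (convex_Icc _ _) (continuous_fq q θ).continuousOn hpos, hpos⟩

/-- For `q ∈ 𝔯⁺` with `|q| ≥ 0.54` and polar angle `θ ∈ [0, π/2]`, the function `f_q`
is strictly convex on `[0, π/2]`, and indeed `f_q''(α) > 0` for all `α ∈ [0, π/2]`. -/
theorem fq_strictly_convex (q : ℝ × ℝ) (hq : q ∈ HillRegionPlus)
    (hr : 0.54 ≤ nrm q) (θ : ℝ) (hθ : θ ∈ Set.Icc (0:ℝ) (Real.pi / 2))
    (hq1 : q.1 = nrm q * Real.cos θ) (hq2 : q.2 = nrm q * Real.sin θ) :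
    StrictConvexOn ℝ (Set.Icc 0 (Real.pi / 2)) (fq q θ) ∧
    ∀ α ∈ Set.Icc (0:ℝ) (Real.pi / 2), 0 < deriv (deriv (fq q θ)) α :=
  fq_strictly_convex_general q hq θ hq1 hq2

end
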